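/- arXiv:1205.2331 — 3 statements merged into one kernel-verified Lean document; each statement's English description precedes it below -/
import Mathlib

section
/- There exists a unique family {s_λ} of elements of Sym, indexed by partitions, with s_∅ = 1, satisfying the Pieri rule: for every i ≥ 1 and every partition λ, h_i · s_λ = Σ_μ s_μ, where the sum is over all partitions μ ⊇ λ such that μ/λ is a horizontal strip of size i. Moreover, this family is a ℚ-basis of Sym. -/
/-! ## Partitions -/

/-- A partition: a weakly decreasing finite list of positive integers. -/
abbrev Ptn : Type := {l : List ℕ+ // l.Pairwise (· ≥ ·)}

/-- The `i`-th part (0-indexed) of a list of positive integers, `0` past the end. -/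
def pget (l : List ℕ+) (i : ℕ) : ℕ := (l.map fun p => (p : ℕ)).getD i 0

/-- The size `|l|` of a list of positive integers: the sum of its parts. -/
def psum (l : List ℕ+) : ℕ := (l.map fun p => (p : ℕ)).sum

/-- The empty partition. -/
def emptyPtn : Ptn := ⟨[], List.Pairwise.nil⟩

/-- Containment of partitions: `μ ⊆ λ` iff `μᵢ ≤ λᵢ` for all `i`. -/
def PtnSub (μ lam : Ptn) : Prop := ∀ i, pget μ.1 i ≤ pget lam.1 i

/-- `λ/μ` is a horizontal strip of size `i`: `μ ⊆ λ`, no two cells of `λ/μ` in the same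
column (equivalently `λ_{i+1} ≤ μ_i` for all `i`), and `|λ| = |μ| + i`. -/
def HStrip (μ lam : Ptn) (i : ℕ) : Prop :=
  PtnSub μ lam ∧ (∀ n, pget lam.1 (n + 1) ≤ pget μ.1 n) ∧ psum lam.1 = psum μ.1 + i

/-- The Kostka number `K_{λ,μ}`: the number of chains
`∅ = ν⁰ ⊆ ν¹ ⊆ ⋯ ⊆ νᵐ = λ` of partitions in which each `νⁱ/νⁱ⁻¹` is a horizontal strip of
size `μᵢ` (semistandard tableaux of shape `λ` and content `μ`). -/
noncomputable def Knum (lam : Ptn) (μ : List ℕ+) : ℕ :=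
  Nat.card {ν : Fin (μ.length + 1) → Ptn //
    ν 0 = emptyPtn ∧ ν (Fin.last μ.length) = lam ∧
      ∀ i : Fin μ.length, HStrip (ν i.castSucc) (ν i.succ) ((μ.get i : ℕ))}

/-! ## SymA -/

/-- `SymA = ℚ[h₁, h₂, …]`, a polynomial algebra on countably many generators. -/
abbrev SymA : Type := MvPolynomial ℕ+ ℚ

/-- The generator `hᵢ` of `SymA`. -/
noncomputable def hGen (i : ℕ+) : SymA := MvPolynomial.X i

/-- `h_λ = h_{λ₁} ⋯ h_{λ_m}`. -/
noncomputable def hL (l : List ℕ+) : SymA := (l.map hGen).prod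

/-- A family `s : Ptn → SymA` with `s ∅ = 1` satisfying the Pieri rule:
`hᵢ • s_λ = Σ_μ s_μ`, the sum over partitions `μ ⊇ λ` with `μ/λ` a horizontal strip
of size `i` (for every `i ≥ 1`). -/
def PieriFamily (s : Ptn → SymA) : Prop :=
  s emptyPtn = 1 ∧
    ∀ (i : ℕ+) (lam : Ptn),
      hGen i * s lam = ∑ᶠ μ ∈ {μ : Ptn | HStrip lam μ (i : ℕ)}, s μ

/-! ## Power series: monomial (quasi-)symmetric functions -/

/-- The ambient algebra of formal power series in countably many commuting variables
`x₀, x₁, x₂, …` (we only use elements of bounded degree). -/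
abbrev PS : Type := MvPowerSeries ℕ ℚ

/-- The complete homogeneous symmetric power series of degree `i`: the sum of all
monomials of degree `i`. -/
def hPS (i : ℕ+) : PS := fun d => if (d.sum fun _ n => n) = (i : ℕ) then 1 else 0

/-- The realization `SymA → PS` sending each generator `hᵢ` to the complete homogeneous
symmetric function of degree `i`. -/
noncomputable def realize : SymA →ₐ[ℚ] PS := MvPolynomial.aeval hPS

/-- The monomial quasi-symmetric function `M_α = Σ_{i₁<⋯<i_m} x_{i₁}^{α₁} ⋯ x_{i_m}^{α_m}`. -/
def Mqs (α : List ℕ+) : PS :=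
  fun d => if (d.support.sort (· ≤ ·)).map (fun j => d j) = α.map (fun p => (p : ℕ))
    then 1 else 0

/-- The monomial symmetric function `m_λ = Σ_{α : λ(α) = λ} M_α`: the sum of all distinct
monomials whose exponent sequence rearranges to `λ`. -/
noncomputable def mPS (lam : Ptn) : PS := ∑ᶠ α ∈ {α : List ℕ+ | α.Perm lam.1}, Mqs α

/-! ## NSym and compositions -/

/-- `NSym`, the free associative algebra on noncommuting generators `H₁, H₂, …`. -/
abbrev NSym : Type := FreeAlgebra ℚ ℕ+

/-- The generator `Hᵢ` of `NSym`. -/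
def Hgen (i : ℕ+) : NSym := FreeAlgebra.ι ℚ i

/-- `H_α = H_{α₁} ⋯ H_{α_m}`. -/
def HL (α : List ℕ+) : NSym := (α.map Hgen).prod

/-- The covering relation of the composition poset: `α` is obtained from `β` either by
prepending a new part equal to `1`, or by replacing the leftmost part of `β` equal to `m`
by `m + 1`. -/
def CCover (β α : List ℕ+) : Prop :=
  α = 1 :: β ∨
    ∃ (m : ℕ+) (l₁ l₂ : List ℕ+), β = l₁ ++ m :: l₂ ∧ α = l₁ ++ (m + 1) :: l₂ ∧ m ∉ l₁

/-- The composition poset order `≤_C`, the reflexive-transitive closure of the covering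
relation. -/
def CLe : List ℕ+ → List ℕ+ → Prop := Relation.ReflTransGen CCover

/-- `(r, c)` is a cell of the skew diagram `α//β` (rows `r` and columns `c` `0`-indexed,
with the diagram of `β` placed in the lower-left corner of the diagram of `α`, i.e. row
`r ≥ ℓ(α) - ℓ(β)` of `α` is aligned with row `r - (ℓ(α) - ℓ(β))` of `β`). -/
def stripCell (β α : List ℕ+) (r c : ℕ) : Prop :=
  r < α.length ∧ c < pget α r ∧
    (r < α.length - β.length ∨ pget β (r - (α.length - β.length)) ≤ c)

/-- `α//β` is a horizontal composition strip of size `i`: `β ≤_C α`, `|α| = |β| + i`, and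
no two cells of `α//β` lie in the same column. -/
def HCStrip (β α : List ℕ+) (i : ℕ) : Prop :=
  CLe β α ∧ psum α = psum β + i ∧
    ∀ r s c, r ≠ s → stripCell β α r c → ¬ stripCell β α s c

/-- A family `S : compositions → NSym` with `S ∅ = 1` satisfying the noncommutative Pieri
rule: `Hᵢ • S_α = Σ_β S_β`, the sum over compositions `β ≥_C α` with `β//α` a horizontal
composition strip of size `i` (for every `i ≥ 1`). -/
def NCPieriFamily (S : List ℕ+ → NSym) : Prop :=
  S [] = 1 ∧
    ∀ (i : ℕ+) (α : List ℕ+),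
      Hgen i * S α = ∑ᶠ β ∈ {β : List ℕ+ | HCStrip α β (i : ℕ)}, S β

/-- `K̃_{α,β}`: the number of chains `∅ = γ⁰ ≤_C γ¹ ≤_C ⋯ ≤_C γᵐ = α` of compositions in
which each `γⁱ//γⁱ⁻¹` is a horizontal composition strip of size `βᵢ` (semistandard
composition tableaux of shape `α` and content `β`). -/
noncomputable def Ktilde (α β : List ℕ+) : ℕ :=
  Nat.card {γ : Fin (β.length + 1) → List ℕ+ //
    γ 0 = [] ∧ γ (Fin.last β.length) = α ∧
      ∀ i : Fin β.length, HCStrip (γ i.castSucc) (γ i.succ) ((β.get i : ℕ))}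

/-- The quasi-symmetric Schur function `QS_α = Σ_β K̃_{α,β} M_β`. -/
noncomputable def QSfun (α : List ℕ+) : PS := ∑ᶠ β : List ℕ+, Ktilde α β • Mqs β

/-- The forgetful map `χ : NSym → SymA`, the algebra homomorphism with `χ(Hᵢ) = hᵢ`. -/
noncomputable def chi : NSym →ₐ[ℚ] SymA := FreeAlgebra.lift ℚ hGen

/-! ## k-bounded objects -/

/-- A partition is `k`-bounded if all of its parts are at most `k`. -/
def kBddP (k : ℕ) (lam : Ptn) : Prop := ∀ p ∈ lam.1, (p : ℕ) ≤ k

/-- A composition is `k`-bounded if all of its parts are at most `k`. -/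
def kBddC (k : ℕ) (α : List ℕ+) : Prop := ∀ p ∈ α, (p : ℕ) ≤ k

/-! Let `U_i` be the operator on `ℚ[Ptn]` sending `λ` to the sum of all `μ` with
`μ/λ` a horizontal strip of size `i`. A Bender–Knuth-type reflection of the middle partition
in a chain `ν ⊆ μ ⊆ ρ` of two horizontal strips exchanges their sizes, so the `U_i` commute.
Writing `λ = λ' ∪ (r)` with `r` its smallest part, the Pieri rule for `h_r · s_{λ'}` contains
`s_λ` with coefficient one and otherwise only partitions of `|λ|` lexicographically larger than
`λ`; solving for `s_λ` determines any Pieri family and defines one. Commutation of the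
`U_i` then gives the full Pieri rule for `schur`. Finally `Sym` acts on `ℚ[Ptn]` with `h_i`
acting by `U_i`, and evaluating at `∅` inverts `e_λ ↦ s_λ`, which is therefore a linear
isomorphism `ℚ[Ptn] ≃ Sym`. -/

namespace Ptn

@[simp] theorem pget_nil (i : ℕ) : pget [] i = 0 := rfl

@[simp] theorem pget_cons_zero (a : ℕ+) (l : List ℕ+) : pget (a :: l) 0 = a := rfl

@[simp] theorem pget_cons_succ (a : ℕ+) (l : List ℕ+) (i : ℕ) :
    pget (a :: l) (i + 1) = pget l i := rfl

theorem pget_eq_zero_iff {l : List ℕ+} {i : ℕ} : pget l i = 0 ↔ l.length ≤ i := by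
  induction l generalizing i with
  | nil => simp
  | cons a t ih =>
    cases i with
    | zero => simp
    | succ i => simpa using ih

theorem pget_eq_getElem {l : List ℕ+} {i : ℕ} (h : i < l.length) : pget l i = l[i] := by
  induction l generalizing i with
  | nil => simp at h
  | cons a t ih =>
    cases i with
    | zero => rfl
    | succ i => exact ih (by simpa using h)

theorem pget_append_of_lt {l : List ℕ+} {r : ℕ+} {i : ℕ} (h : i < l.length) :
    pget (l ++ [r]) i = pget l i := by
  rw [pget_eq_getElem (by simp; omega), pget_eq_getElem h, List.getElem_append_left h]

theorem pget_succ_le {l : List ℕ+} (hl : l.Pairwise (· ≥ ·)) (i : ℕ) :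
    pget l (i + 1) ≤ pget l i := by
  rcases lt_or_ge (i + 1) l.length with h | h
  · rw [pget_eq_getElem h, pget_eq_getElem (by omega)]
    exact List.pairwise_iff_getElem.1 hl i (i + 1) (by omega) h (by omega)
  · simp [pget_eq_zero_iff.2 h]

theorem pget_injective {l l' : List ℕ+} (h : ∀ i, pget l i = pget l' i) : l = l' := by
  induction l generalizing l' with
  | nil =>
    cases l' with
    | nil => rfl
    | cons b t => exact absurd (pget_eq_zero_iff.1 (h 0).symm) (by simp)
  | cons a t ih =>
    cases l' with
    | nil => exact absurd (pget_eq_zero_iff.1 (h 0)) (by simp)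
    | cons b t' => rw [PNat.coe_injective (h 0), ih fun i => h (i + 1)]

@[ext]
theorem ext {lam μ : Ptn} (h : ∀ i, pget lam.1 i = pget μ.1 i) : lam = μ :=
  Subtype.ext (pget_injective h)

theorem psum_eq_sum_range {l : List ℕ+} {N : ℕ} (hN : l.length ≤ N) :
    psum l = ∑ i ∈ Finset.range N, pget l i := by
  induction l generalizing N with
  | nil => simp [psum]
  | cons a t ih =>
    obtain ⟨M, rfl⟩ : ∃ M, N = M + 1 := ⟨N - 1, by simp at hN; omega⟩
    simp only [Finset.sum_range_succ', pget_cons_succ, ← ih (by simpa using hN)]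
    simp [psum, add_comm]

theorem length_le_psum (l : List ℕ+) : l.length ≤ psum l := by
  induction l with
  | nil => simp
  | cons a t ih => simp [psum] at *; have := a.pos; omega

theorem pget_le_psum (l : List ℕ+) (i : ℕ) : pget l i ≤ psum l := by
  induction l generalizing i with
  | nil => simp
  | cons a t ih =>
    cases i with
    | zero => simp [psum]
    | succ i => exact (ih i).trans (by simp [psum])

theorem finite_setOf_psum_le (n : ℕ) : {lam : Ptn | psum lam.1 ≤ n}.Finite := by
  rw [← Set.finite_coe_iff]
  refine Finite.of_injective
    (fun lam => fun k : Fin n => (⟨pget lam.1.1 k, ?_⟩ : Fin (n + 1))) fun lam μ h => ?_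
  · exact Nat.lt_succ_of_le ((pget_le_psum _ _).trans lam.2)
  · refine Subtype.ext (ext fun i => ?_)
    rcases lt_or_ge i n with hi | hi
    · exact congrArg Fin.val (congrFun h ⟨i, hi⟩)
    · rw [pget_eq_zero_iff.2 (((length_le_psum _).trans lam.2).trans hi),
        pget_eq_zero_iff.2 (((length_le_psum _).trans μ.2).trans hi)]

noncomputable def ofAntitone (f : ℕ → ℕ) (hf : Antitone f) (hz : ∃ N, f N = 0) : Ptn :=
  ⟨(List.range (Nat.find hz)).pmap
      (fun k (hk : k < Nat.find hz) => (f k).toPNat (Nat.pos_of_ne_zero (Nat.find_min hz hk)))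
      (fun _ hk => List.mem_range.1 hk), by
    rw [List.pairwise_pmap]
    exact List.pairwise_lt_range.imp_of_mem fun _ _ hab _ _ =>
      PNat.coe_le_coe _ _ |>.1 (hf hab.le)⟩

theorem pget_ofAntitone (f : ℕ → ℕ) (hf : Antitone f) (hz : ∃ N, f N = 0) (i : ℕ) :
    pget (ofAntitone f hf hz).1 i = f i := by
  have hlen : (ofAntitone f hf hz).1.length = Nat.find hz := by simp [ofAntitone]
  rcases lt_or_ge i (Nat.find hz) with h | h
  · rw [pget_eq_getElem (hlen ▸ h)]
    simp only [ofAntitone, List.getElem_pmap, List.getElem_range]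
    rfl
  · rw [pget_eq_zero_iff.2 (hlen ▸ h)]
    exact (Nat.eq_zero_of_le_zero ((hf h).trans_eq (Nat.find_spec hz))).symm

def snoc (lam : Ptn) (r : ℕ+) (hr : ∀ p ∈ lam.1, r ≤ p) : Ptn :=
  ⟨lam.1 ++ [r], List.pairwise_append.2 ⟨lam.2, List.pairwise_singleton _ _,
    fun a ha _ hb => List.mem_singleton.1 hb ▸ hr a ha⟩⟩

def dropLast (lam : Ptn) : Ptn := ⟨lam.1.dropLast, lam.2.sublist (List.dropLast_sublist _)⟩

theorem getLast_le_of_mem_dropLast (lam : Ptn) (h : lam.1 ≠ []) :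
    ∀ p ∈ lam.dropLast.1, lam.1.getLast h ≤ p := by
  intro p hp
  have hl := lam.2
  rw [← List.dropLast_append_getLast h] at hl
  exact (List.pairwise_append.1 hl).2.2 p hp _ (List.mem_singleton_self _)

theorem snoc_dropLast (lam : Ptn) (h : lam.1 ≠ []) :
    lam.dropLast.snoc (lam.1.getLast h) (getLast_le_of_mem_dropLast lam h) = lam :=
  Subtype.ext (List.dropLast_append_getLast h)

theorem eq_empty_or_eq_snoc (lam : Ptn) : lam = emptyPtn ∨ ∃ ν r hr, lam = snoc ν r hr := by
  by_cases h : lam.1 = []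
  · exact Or.inl (Subtype.ext h)
  · exact Or.inr ⟨_, _, _, (snoc_dropLast lam h).symm⟩

section Snoc

variable {ν : Ptn} {r : ℕ+} {hr : ∀ p ∈ ν.1, r ≤ p}

@[simp] theorem dropLast_snoc : (ν.snoc r hr).dropLast = ν :=
  Subtype.ext List.dropLast_concat

@[simp] theorem getLast_snoc (h : (ν.snoc r hr).1 ≠ []) : (ν.snoc r hr).1.getLast h = r :=
  List.getLast_concat ..

theorem le_of_mem_snoc {i : ℕ+} (hir : i ≤ r) : ∀ p ∈ (ν.snoc r hr).1, i ≤ p := by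
  simp only [snoc, List.mem_append, List.mem_singleton]
  rintro p (hp | rfl)
  exacts [hir.trans (hr p hp), hir]

theorem psum_snoc : psum (ν.snoc r hr).1 = psum ν.1 + r := by
  simp [snoc, psum]

theorem hStrip_snoc : HStrip ν (ν.snoc r hr) r := by
  refine ⟨fun i => ?_, fun n => ?_, psum_snoc⟩
  · rcases lt_or_ge i ν.1.length with h | h
    · exact (pget_append_of_lt h).ge
    · simp [pget_eq_zero_iff.2 h]
  · rcases lt_or_ge n ν.1.length with h | h
    · exact (pget_succ_le (ν.snoc r hr).2 n).trans_eq (pget_append_of_lt h)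
    · simp [snoc, pget_eq_zero_iff.2 (show (ν.1 ++ [r]).length ≤ n + 1 by simpa)]

end Snoc

noncomputable def lexRank (lam : Ptn) : ℕ :=
  {ρ : Ptn | psum ρ.1 = psum lam.1 ∧ lam.1 ≤ ρ.1}.ncard

theorem lexRank_lt {lam μ : Ptn} (hsum : psum μ.1 = psum lam.1) (hlt : lam.1 < μ.1) :
    lexRank μ < lexRank lam := by
  refine Set.ncard_lt_ncard ⟨fun ρ hρ => ⟨hρ.1.trans hsum, hlt.le.trans hρ.2⟩, fun hsub => ?_⟩
    ((finite_setOf_psum_le (psum lam.1)).subset fun ρ hρ => hρ.1.le)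
  exact (hsub ⟨rfl, le_rfl⟩).2.not_gt hlt

end Ptn

theorem PtnSub.length_le {μ lam : Ptn} (h : PtnSub μ lam) : μ.1.length ≤ lam.1.length :=
  Ptn.pget_eq_zero_iff.1 <| Nat.eq_zero_of_le_zero <|
    (h _).trans_eq (Ptn.pget_eq_zero_iff.2 le_rfl)

theorem append_singleton_lt_of_interlace {t u : List ℕ+} {r : ℕ+}
    (hsub : ∀ k, pget t k ≤ pget u k) (hint : ∀ k, pget u (k + 1) ≤ pget t k)
    (hsum : psum u = psum t + r) (hne : u ≠ t ++ [r]) : t ++ [r] < u := by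
  induction t generalizing u with
  | nil =>
    have hlen : u.length ≤ 1 := Ptn.pget_eq_zero_iff.1 (Nat.eq_zero_of_le_zero (hint 0))
    rcases u with _ | ⟨b, _ | ⟨c, u⟩⟩
    · exact absurd hsum (by simp [psum, r.ne_zero.symm])
    · simp [psum] at hsum
      simp [hsum] at hne
    · simp at hlen
  | cons a t ih =>
    obtain ⟨b, u, rfl⟩ : ∃ b u', u = b :: u' := List.exists_cons_of_ne_nil <| by
      rintro rfl; simpa using hsub 0
    rcases (PNat.coe_le_coe _ _ |>.1 (hsub 0)).lt_or_eq with hab | rfl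
    · exact List.Lex.rel hab
    · refine List.Lex.cons (ih (fun k => hsub (k + 1)) (fun k => hint (k + 1)) ?_ ?_)
      · simp [psum] at hsum ⊢; omega
      · simpa using hne

theorem finite_setOf_hStrip (lam : Ptn) (i : ℕ) : {μ : Ptn | HStrip lam μ i}.Finite :=
  (Ptn.finite_setOf_psum_le (psum lam.1 + i)).subset fun _ hμ => hμ.2.2.le

noncomputable def hStrips (lam : Ptn) (i : ℕ) : Finset Ptn := (finite_setOf_hStrip lam i).toFinset

@[simp] theorem mem_hStrips {lam μ : Ptn} {i : ℕ} : μ ∈ hStrips lam i ↔ HStrip lam μ i :=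
  Set.Finite.mem_toFinset _

theorem finsum_mem_hStrip {M : Type*} [AddCommMonoid M] (s : Ptn → M) (lam : Ptn) (i : ℕ) :
    ∑ᶠ μ ∈ {μ : Ptn | HStrip lam μ i}, s μ = ∑ μ ∈ hStrips lam i, s μ :=
  finsum_mem_eq_finite_toFinset_sum _ _

namespace Ptn

variable {ν : Ptn} {r : ℕ+} {hr : ∀ p ∈ ν.1, r ≤ p}

theorem lexRank_lt_of_mem_erase {μ : Ptn} (hμ : μ ∈ (hStrips ν r).erase (ν.snoc r hr)) :
    psum μ.1 = psum (ν.snoc r hr).1 ∧ lexRank μ < lexRank (ν.snoc r hr) := by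
  obtain ⟨hne, hμ⟩ := Finset.mem_erase.1 hμ
  rw [mem_hStrips] at hμ
  have hsum : psum μ.1 = psum (ν.snoc r hr).1 := hμ.2.2.trans psum_snoc.symm
  refine ⟨hsum, lexRank_lt hsum (append_singleton_lt_of_interlace hμ.1 hμ.2.1 hμ.2.2 ?_)⟩
  exact fun h => hne (Subtype.ext h)

theorem eq_sub_sum_erase {M : Type*} [AddCommGroup M] {T : M → M} {f : Ptn → M}
    (hf : T (f ν) = ∑ μ ∈ hStrips ν r, f μ) :
    f (ν.snoc r hr) = T (f ν) - ∑ μ ∈ (hStrips ν r).erase (ν.snoc r hr), f μ := by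
  rw [hf, ← Finset.add_sum_erase _ _ (mem_hStrips.2 hStrip_snoc), add_sub_cancel_right]

end Ptn

theorem eq_of_pieri {M : Type*} [AddCommGroup M] (T : ℕ+ → M → M) {f g : Ptn → M}
    (hf : ∀ i lam, T i (f lam) = ∑ μ ∈ hStrips lam i, f μ)
    (hg : ∀ i lam, T i (g lam) = ∑ μ ∈ hStrips lam i, g μ)
    (h0 : f emptyPtn = g emptyPtn) (lam : Ptn) : f lam = g lam := by
  obtain rfl | ⟨ν, r, hr, rfl⟩ := lam.eq_empty_or_eq_snoc
  · exact h0
  have hν : f ν = g ν := eq_of_pieri T hf hg h0 ν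
  have hμ : ∀ μ ∈ (hStrips ν r).erase (ν.snoc r hr), f μ = g μ := fun μ hμ =>
    have := Ptn.lexRank_lt_of_mem_erase hμ
    eq_of_pieri T hf hg h0 μ
  rw [Ptn.eq_sub_sum_erase (hf r ν), Ptn.eq_sub_sum_erase (hg r ν), hν, Finset.sum_congr rfl hμ]
termination_by (psum lam.1, lam.lexRank)
decreasing_by
  all_goals subst_vars
  · exact Prod.Lex.left _ _ (by rw [Ptn.psum_snoc]; simp)
  · rw [this.1]; exact Prod.Lex.right _ this.2

section StripSwap

variable (ν ρ : Ptn)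

/- In a chain `ν ⊆ μ ⊆ ρ` of two horizontal strips, `μ` is constrained exactly by
`swapLo k ≤ μ_k ≤ swapHi k`, and `μ_k ↦ swapLo k + swapHi k - μ_k` exchanges the sizes of the
two strips because `∑ (swapLo + swapHi) = |ν| + |ρ|`. -/

def swapLo (k : ℕ) : ℕ := max (pget ν.1 k) (pget ρ.1 (k + 1))

def swapHi : ℕ → ℕ
  | 0 => pget ρ.1 0
  | k + 1 => min (pget ρ.1 (k + 1)) (pget ν.1 k)

variable {ν ρ}

theorem swapHi_le (k : ℕ) : swapHi ν ρ k ≤ pget ρ.1 k := by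
  cases k with
  | zero => exact le_rfl
  | succ k => exact min_le_left _ _

theorem swapLo_le_of_hStrip {μ : Ptn} {a b : ℕ} (h₁ : HStrip ν μ a) (h₂ : HStrip μ ρ b)
    (k : ℕ) : swapLo ν ρ k ≤ pget μ.1 k :=
  max_le (h₁.1 k) (h₂.2.1 k)

theorem le_swapHi_of_hStrip {μ : Ptn} {a b : ℕ} (h₁ : HStrip ν μ a) (h₂ : HStrip μ ρ b)
    (k : ℕ) : pget μ.1 k ≤ swapHi ν ρ k := by
  cases k with
  | zero => exact h₂.1 0
  | succ k => exact le_min (h₂.1 (k + 1)) (h₁.2.1 k)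

theorem sum_swapLo_add_swapHi {N : ℕ} (hν : ν.1.length ≤ N) (hρ : ρ.1.length ≤ N) :
    ∑ k ∈ Finset.range (N + 1), (swapLo ν ρ k + swapHi ν ρ k) = psum ν.1 + psum ρ.1 := by
  have hlo : swapLo ν ρ N = 0 := by
    simp [swapLo, Ptn.pget_eq_zero_iff.2 hν, Ptn.pget_eq_zero_iff.2 (hρ.trans N.le_succ)]
  have hpair : ∀ k, swapLo ν ρ k + swapHi ν ρ (k + 1) = pget ν.1 k + pget ρ.1 (k + 1) :=
    fun k => by rw [swapLo, swapHi, min_comm, max_add_min]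
  have hsum := Finset.sum_congr rfl fun k (_ : k ∈ Finset.range N) => hpair k
  rw [Finset.sum_add_distrib, Finset.sum_add_distrib] at hsum
  rw [Finset.sum_add_distrib, Finset.sum_range_succ, Finset.sum_range_succ', hlo,
    Ptn.psum_eq_sum_range hν, Ptn.psum_eq_sum_range (hρ.trans N.le_succ),
    Finset.sum_range_succ', show swapHi ν ρ 0 = pget ρ.1 0 from rfl]
  omega

theorem hStrip_of_swapLo_le_of_le_swapHi {μ : Ptn} {a b : ℕ}
    (hlo : ∀ k, swapLo ν ρ k ≤ pget μ.1 k) (hhi : ∀ k, pget μ.1 k ≤ swapHi ν ρ k)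
    (ha : psum μ.1 = psum ν.1 + a) (hb : psum ρ.1 = psum μ.1 + b) :
    HStrip ν μ a ∧ HStrip μ ρ b :=
  ⟨⟨fun k => (le_max_left _ _).trans (hlo k), fun k => (hhi (k + 1)).trans (min_le_right _ _), ha⟩,
    ⟨fun k => (hhi k).trans (swapHi_le k), fun k => (le_max_right _ _).trans (hlo k), hb⟩⟩

theorem exists_hStrip_swap {μ : Ptn} {a b : ℕ} (h₁ : HStrip ν μ a) (h₂ : HStrip μ ρ b) :
    ∃ μ' : Ptn, (∀ k, pget μ'.1 k = swapLo ν ρ k + swapHi ν ρ k - pget μ.1 k) ∧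
      HStrip ν μ' b ∧ HStrip μ' ρ a := by
  set f : ℕ → ℕ := fun k => swapLo ν ρ k + swapHi ν ρ k - pget μ.1 k
  have hlo : ∀ k, swapLo ν ρ k ≤ f k := fun k => by
    have := le_swapHi_of_hStrip h₁ h₂ k; simp only [f]; omega
  have hhi : ∀ k, f k ≤ swapHi ν ρ k := fun k => by
    have := swapLo_le_of_hStrip h₁ h₂ k; simp only [f]; omega
  set N := ρ.1.length
  have hfN : f N = 0 := Nat.eq_zero_of_le_zero <|
    (hhi N).trans <| (swapHi_le N).trans_eq (Ptn.pget_eq_zero_iff.2 le_rfl)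
  have hf : Antitone f := antitone_nat_of_succ_le fun k =>
    (hhi _).trans <| (min_le_right _ _).trans <| (le_max_left _ _).trans (hlo k)
  set μ' := Ptn.ofAntitone f hf ⟨N, hfN⟩
  have hμ' : ∀ k, pget μ'.1 k = f k := Ptn.pget_ofAntitone f hf _
  have hμN : μ.1.length ≤ N := h₂.1.length_le
  have hμ'N : μ'.1.length ≤ N := Ptn.pget_eq_zero_iff.1 ((hμ' N).trans hfN)
  have hsum : psum μ'.1 + psum μ.1 = psum ν.1 + psum ρ.1 := by
    rw [Ptn.psum_eq_sum_range (hμ'N.trans N.le_succ), Ptn.psum_eq_sum_range (hμN.trans N.le_succ),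
      ← sum_swapLo_add_swapHi (h₁.1.length_le.trans hμN) le_rfl, ← Finset.sum_add_distrib]
    refine Finset.sum_congr rfl fun k _ => ?_
    have := swapLo_le_of_hStrip h₁ h₂ k
    have := le_swapHi_of_hStrip h₁ h₂ k
    simp only [hμ', f]
    omega
  refine ⟨μ', hμ', hStrip_of_swapLo_le_of_le_swapHi (fun k => (hμ' k).symm ▸ hlo k)
    (fun k => (hμ' k).symm ▸ hhi k) ?_ ?_⟩
  all_goals have := h₁.2.2; have := h₂.2.2; omega

open Classical in
noncomputable def stripSwap (ν ρ : Ptn) (a b : ℕ) (μ : Ptn) : Ptn :=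
  if h : HStrip ν μ a ∧ HStrip μ ρ b then (exists_hStrip_swap h.1 h.2).choose else μ

theorem stripSwap_spec {μ : Ptn} {a b : ℕ} (h₁ : HStrip ν μ a) (h₂ : HStrip μ ρ b) :
    (∀ k, pget (stripSwap ν ρ a b μ).1 k = swapLo ν ρ k + swapHi ν ρ k - pget μ.1 k) ∧
      HStrip ν (stripSwap ν ρ a b μ) b ∧ HStrip (stripSwap ν ρ a b μ) ρ a := by
  rw [stripSwap, dif_pos ⟨h₁, h₂⟩]
  exact (exists_hStrip_swap h₁ h₂).choose_spec

theorem stripSwap_stripSwap {μ : Ptn} {a b : ℕ} (h₁ : HStrip ν μ a) (h₂ : HStrip μ ρ b) :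
    stripSwap ν ρ b a (stripSwap ν ρ a b μ) = μ := by
  obtain ⟨hμ', h₁', h₂'⟩ := stripSwap_spec h₁ h₂
  ext k
  rw [(stripSwap_spec h₁' h₂').1, hμ']
  have := swapLo_le_of_hStrip h₁ h₂ k
  have := le_swapHi_of_hStrip h₁ h₂ k
  omega

end StripSwap

section PieriOperator

variable (R : Type*) [CommSemiring R]

noncomputable def pieriOp (i : ℕ) : Module.End R (Ptn →₀ R) :=
  Finsupp.linearCombination R fun lam => ∑ μ ∈ hStrips lam i, Finsupp.single μ 1

variable {R}

theorem pieriOp_single (i : ℕ) (lam : Ptn) :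
    pieriOp R i (Finsupp.single lam 1) = ∑ μ ∈ hStrips lam i, Finsupp.single μ 1 := by
  simp [pieriOp]

theorem commute_pieriOp (i j : ℕ) : Commute (pieriOp R i) (pieriOp R j) := by
  refine Finsupp.lhom_ext' fun ν => LinearMap.ext_ring ?_
  simp only [LinearMap.comp_apply, Module.End.mul_apply, Finsupp.lsingle_apply,
    pieriOp_single, map_sum]
  rw [Finset.sum_sigma', Finset.sum_sigma']
  refine Finset.sum_nbij' (fun p => ⟨stripSwap ν p.2 j i p.1, p.2⟩)
    (fun p => ⟨stripSwap ν p.2 i j p.1, p.2⟩) ?_ ?_ ?_ ?_ fun _ _ => rfl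
  all_goals
    rintro ⟨μ, ρ⟩ hp
    simp only [Finset.mem_sigma, mem_hStrips] at hp ⊢
  · exact (stripSwap_spec hp.1 hp.2).2
  · exact (stripSwap_spec hp.1 hp.2).2
  · rw [stripSwap_stripSwap hp.1 hp.2]
  · rw [stripSwap_stripSwap hp.1 hp.2]

end PieriOperator

/-- The Pieri rule for `h_r · s_{λ'}`, where `λ = λ' ∪ (r)` and `r` is the last part of `λ`,
solved for `s_λ`. -/
noncomputable def schur (lam : Ptn) : SymA :=
  if h : lam.1 = [] then 1
  else
    hGen (lam.1.getLast h) * schur lam.dropLast -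
      ∑ μ ∈ ((hStrips lam.dropLast (lam.1.getLast h)).erase lam).attach, schur μ
termination_by (psum lam.1, lam.lexRank)
decreasing_by
  · have := congrArg (psum ·.1) (Ptn.snoc_dropLast lam h)
    simp only [Ptn.psum_snoc] at this
    exact Prod.Lex.left _ _ (by have := (lam.1.getLast h).pos; omega)
  · have hμ := Ptn.lexRank_lt_of_mem_erase (μ := μ) (by rw [Ptn.snoc_dropLast]; exact μ.2)
    rw [Ptn.snoc_dropLast] at hμ
    rw [hμ.1]
    exact Prod.Lex.right _ hμ.2

theorem schur_empty : schur emptyPtn = 1 := by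
  rw [schur]
  exact dif_pos rfl

section Snoc

variable {ν : Ptn} {r : ℕ+} {hr : ∀ p ∈ ν.1, r ≤ p}

theorem schur_snoc :
    schur (ν.snoc r hr) = hGen r * schur ν - ∑ μ ∈ (hStrips ν r).erase (ν.snoc r hr), schur μ := by
  rw [schur, dif_neg (by simp [Ptn.snoc]), Finset.sum_attach]
  simp

theorem hGen_mul_schur_of_le (hr : ∀ p ∈ ν.1, r ≤ p) :
    hGen r * schur ν = ∑ μ ∈ hStrips ν r, schur μ := by
  rw [← Finset.add_sum_erase _ _ (mem_hStrips.2 (Ptn.hStrip_snoc (hr := hr))), schur_snoc]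
  abel

end Snoc

noncomputable def schurMap : (Ptn →₀ ℚ) →ₗ[ℚ] SymA := Finsupp.linearCombination ℚ schur

@[simp] theorem schurMap_single (μ : Ptn) : schurMap (Finsupp.single μ 1) = schur μ := by
  simp [schurMap]

theorem schurMap_pieriOp_single (i : ℕ) (μ : Ptn) :
    schurMap (pieriOp ℚ i (Finsupp.single μ 1)) = ∑ κ ∈ hStrips μ i, schur κ := by
  simp [pieriOp_single]

theorem hGen_mul_schurMap_sum {i : ℕ+} {s : Finset Ptn}
    (h : ∀ μ ∈ s, hGen i * schur μ = ∑ κ ∈ hStrips μ i, schur κ) :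
    hGen i * schurMap (∑ μ ∈ s, Finsupp.single μ 1) =
      schurMap (pieriOp ℚ i (∑ μ ∈ s, Finsupp.single μ 1)) := by
  simp only [map_sum, Finset.mul_sum, schurMap_single, schurMap_pieriOp_single]
  exact Finset.sum_congr rfl h

theorem hGen_mul_schur (i : ℕ+) (lam : Ptn) :
    hGen i * schur lam = ∑ μ ∈ hStrips lam i, schur μ := by
  obtain rfl | ⟨ν, r, hr, rfl⟩ := lam.eq_empty_or_eq_snoc
  · exact hGen_mul_schur_of_le (by simp [emptyPtn])
  rcases le_or_gt i r with hir | hri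
  · exact hGen_mul_schur_of_le (Ptn.le_of_mem_snoc hir)
  set e : Ptn → Ptn →₀ ℚ := fun μ => Finsupp.single μ 1
  set w := ∑ μ ∈ (hStrips ν r).erase (ν.snoc r hr), e μ
  have ih_ν : hGen i * schurMap (e ν) = schurMap (pieriOp ℚ i (e ν)) := by
    have := Ptn.psum_snoc (hr := hr)
    rw [schurMap_single, schurMap_pieriOp_single]
    exact hGen_mul_schur i ν
  have ih_strips : hGen r * schurMap (pieriOp ℚ i (e ν)) =
      schurMap (pieriOp ℚ r (pieriOp ℚ i (e ν))) := by
    rw [pieriOp_single]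
    refine hGen_mul_schurMap_sum fun κ hκ => ?_
    have := (mem_hStrips.1 hκ).2.2
    have := Ptn.psum_snoc (hr := hr)
    exact hGen_mul_schur r κ
  have ih_erase : hGen i * schurMap w = schurMap (pieriOp ℚ i w) :=
    hGen_mul_schurMap_sum fun μ hμ =>
      have := Ptn.lexRank_lt_of_mem_erase hμ
      hGen_mul_schur i μ
  have h_snoc : e (ν.snoc r hr) = pieriOp ℚ r (e ν) - w :=
    Ptn.eq_sub_sum_erase (pieriOp_single r ν)
  have h_def : schurMap (pieriOp ℚ r (e ν)) = hGen r * schurMap (e ν) := by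
    rw [schurMap_pieriOp_single, schurMap_single, hGen_mul_schur_of_le hr]
  -- expand `h_i h_r s_ν` through `U_r U_i = U_i U_r`
  calc hGen i * schur (ν.snoc r hr)
      = hGen i * schurMap (e (ν.snoc r hr)) := by rw [schurMap_single]
    _ = hGen r * (hGen i * schurMap (e ν)) - hGen i * schurMap w := by
      rw [h_snoc, map_sub, h_def]; ring
    _ = schurMap (pieriOp ℚ i (pieriOp ℚ r (e ν) - w)) := by
      rw [ih_ν, ih_strips, ih_erase, ← Module.End.mul_apply, (commute_pieriOp r i).eq,
        Module.End.mul_apply, map_sub, map_sub]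
    _ = ∑ μ ∈ hStrips (ν.snoc r hr) i, schur μ := by rw [← h_snoc, schurMap_pieriOp_single]
termination_by (psum lam.1 + i, (i : ℕ), lam.lexRank)
decreasing_by
  all_goals subst_vars
  · exact Prod.Lex.left _ _ (by simp [Ptn.psum_snoc])
  · exact Prod.Lex.right' _ (by omega) (Prod.Lex.left _ _ (PNat.coe_lt_coe _ _ |>.2 hri))
  · rw [this.1]; exact Prod.Lex.right _ (Prod.Lex.right _ this.2)

theorem hGen_mul_schurMap (i : ℕ+) (v : Ptn →₀ ℚ) :
    hGen i * schurMap v = schurMap (pieriOp ℚ i v) := by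
  have : LinearMap.mulLeft ℚ (hGen i) ∘ₗ schurMap = schurMap ∘ₗ pieriOp ℚ i :=
    Finsupp.lhom_ext' fun μ => LinearMap.ext_ring <| by
      simpa [schurMap_pieriOp_single] using hGen_mul_schur i μ
  exact LinearMap.congr_fun this v

theorem schurMap_surjective : Function.Surjective schurMap := by
  rw [← LinearMap.range_eq_top, eq_top_iff]
  intro p _
  induction p using MvPolynomial.induction_on with
  | C a =>
    exact ⟨Finsupp.single emptyPtn a, by simp [schurMap, schur_empty, MvPolynomial.C_eq_smul_one]⟩
  | add p q hp hq => exact Submodule.add_mem _ (hp trivial) (hq trivial)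
  | mul_X p i hp =>
    obtain ⟨v, rfl⟩ := hp trivial
    exact ⟨pieriOp ℚ i v, by rw [mul_comm, ← hGen_mul_schurMap, hGen]⟩

section SchurCoord

open scoped IsMulCommutative

noncomputable def pieriAlgebra : Subalgebra ℚ (Module.End ℚ (Ptn →₀ ℚ)) :=
  Algebra.adjoin ℚ (Set.range fun i : ℕ+ => pieriOp ℚ i)

instance : IsMulCommutative pieriAlgebra :=
  Algebra.isMulCommutative_adjoin ℚ <| by
    rintro _ ⟨i, rfl⟩ _ ⟨j, rfl⟩
    exact (commute_pieriOp i j).eq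

noncomputable def pieriRep : SymA →ₐ[ℚ] Module.End ℚ (Ptn →₀ ℚ) :=
  pieriAlgebra.val.comp <| MvPolynomial.aeval fun i =>
    ⟨pieriOp ℚ i, Algebra.subset_adjoin ⟨i, rfl⟩⟩

theorem pieriRep_hGen (i : ℕ+) : pieriRep (hGen i) = pieriOp ℚ i := by
  simp [pieriRep, hGen]

noncomputable def schurCoord : SymA →ₗ[ℚ] Ptn →₀ ℚ :=
  LinearMap.applyₗ (Finsupp.single emptyPtn 1) ∘ₗ pieriRep.toLinearMap

theorem schurCoord_hGen_mul (i : ℕ+) (p : SymA) :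
    schurCoord (hGen i * p) = pieriOp ℚ i (schurCoord p) := by
  simp only [schurCoord, LinearMap.comp_apply, LinearMap.applyₗ_apply_apply,
    AlgHom.toLinearMap_apply, map_mul, pieriRep_hGen, Module.End.mul_apply]

theorem schurCoord_schur (lam : Ptn) : schurCoord (schur lam) = Finsupp.single lam 1 := by
  refine eq_of_pieri (f := fun μ => schurCoord (schur μ)) (fun i => pieriOp ℚ i)
    (fun i μ => ?_) (fun i μ => pieriOp_single i μ) ?_ lam
  · rw [← map_sum, ← hGen_mul_schur, schurCoord_hGen_mul]
  · simp [schurCoord, schur_empty]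

end SchurCoord

theorem schurMap_injective : Function.Injective schurMap := by
  have : schurCoord ∘ₗ schurMap = LinearMap.id :=
    Finsupp.lhom_ext' fun μ => LinearMap.ext_ring (by simp [schurCoord_schur])
  exact Function.LeftInverse.injective (g := schurCoord) (LinearMap.congr_fun this)

theorem schurMap_bijective : Function.Bijective schurMap :=
  ⟨schurMap_injective, schurMap_surjective⟩

noncomputable def schurEquiv : (Ptn →₀ ℚ) ≃ₗ[ℚ] SymA :=
  LinearEquiv.ofBijective schurMap schurMap_bijective

noncomputable def schurBasis : Module.Basis Ptn ℚ SymA := Finsupp.basisSingleOne.map schurEquiv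

@[simp] theorem coe_schurBasis : ⇑schurBasis = schur := by
  funext lam
  simp [schurBasis, schurEquiv, LinearEquiv.ofBijective_apply]

theorem pieriFamily_iff {s : Ptn → SymA} : PieriFamily s ↔
    s emptyPtn = 1 ∧ ∀ (i : ℕ+) (lam : Ptn), hGen i * s lam = ∑ μ ∈ hStrips lam i, s μ := by
  simp only [PieriFamily, finsum_mem_hStrip]

theorem PieriFamily.eq_schur {s : Ptn → SymA} (hs : PieriFamily s) : s = schur :=
  funext <| eq_of_pieri (fun i x => hGen i * x) (pieriFamily_iff.1 hs).2 hGen_mul_schur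
    ((pieriFamily_iff.1 hs).1.trans schur_empty.symm)

/-- There exists a unique family `{s_λ}` in `Sym`, indexed by partitions,
with `s_∅ = 1`, satisfying the Pieri rule; moreover, any such family is a ℚ-basis of `Sym`. -/
theorem schur_existsUnique_and_basis :
    (∃! s : Ptn → SymA, PieriFamily s) ∧
      ∀ s : Ptn → SymA, PieriFamily s →
        LinearIndependent ℚ s ∧ Submodule.span ℚ (Set.range s) = ⊤ := by
  refine ⟨⟨schur, pieriFamily_iff.2 ⟨schur_empty, hGen_mul_schur⟩, fun s hs => hs.eq_schur⟩,
    fun s hs => ?_⟩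
  rw [hs.eq_schur, ← coe_schurBasis]
  exact ⟨schurBasis.linearIndependent, schurBasis.span_eq⟩
end

section
/- There exists a unique family {S_α} of elements of NSym, indexed by compositions, with S_∅ = 1, satisfying the noncommutative Pieri rule: for every i ≥ 1 and every composition α, H_i · S_α = Σ_β S_β, where the sum is over all compositions β with β ≥_C α such that β//α is a horizontal composition strip of size i. Moreover, this family is a ℚ-basis of NSym. -/
/-! Order compositions by size, then length, then first part. Among the horizontal strips of
size `b` over `γ`, the composition `b :: γ` is the largest, so the Pieri rule
`H_b S_γ = S_{b :: γ} + Σ (smaller strips)` is a triangular recursion that both defines `S`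
and determines it uniquely.

Strips of size `i` raise the size by exactly `i`, and `H_α = H_{α₁} ⋯ H_{α_m} · S_∅`, so in each
size filtration `{|α| ≤ n}` the families `S` and `H` span the same finite-dimensional space;
as `H` is a basis of `NSym`, counting dimensions shows that `S` is one too. -/

open Relation Submodule

section LinearAlgebra

theorem LinearIndependent.of_filtered_mutual_span {ι R M : Type*} [CommRing R] [Nontrivial R]
    [AddCommGroup M] [Module R M] {b v : ι → M} (f : ι → ℕ)
    (hf : ∀ n, {i | f i ≤ n}.Finite) (hb : LinearIndependent R b)
    (hvb : ∀ i, v i ∈ span R (b '' {j | f j ≤ f i}))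
    (hbv : ∀ i, b i ∈ span R (v '' {j | f j ≤ f i})) : LinearIndependent R v := by
  have span_le_of {u w : ι → M} (huw : ∀ i, u i ∈ span R (w '' {j | f j ≤ f i})) (n : ℕ) :
      span R (u '' {j | f j ≤ n}) ≤ span R (w '' {j | f j ≤ n}) := by
    refine span_le.2 ?_
    rintro _ ⟨i, hi, rfl⟩
    have hsub : {j | f j ≤ f i} ⊆ {j | f j ≤ n} := fun j (hj : f j ≤ f i) => le_trans hj hi
    exact span_mono (Set.image_mono hsub) (huw i)
  have indep_le (n : ℕ) : LinearIndepOn R v {j | f j ≤ n} := by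
    have := (hf n).fintype
    have hspan := le_antisymm (span_le_of hvb n) (span_le_of hbv n)
    unfold LinearIndepOn
    rw [linearIndependent_iff_card_eq_finrank_span, Set.finrank, ← Set.image_eq_range, hspan,
      Set.image_eq_range]
    exact (finrank_span_eq_card (hb.comp Subtype.val Subtype.val_injective)).symm
  have hunion : (⋃ n, {j | f j ≤ n}) = Set.univ :=
    Set.iUnion_eq_univ_iff.2 fun i => ⟨f i, le_refl (f i)⟩
  rw [← linearIndepOn_univ_iff, ← hunion]
  exact linearIndepOn_iUnion_of_directed
    (Monotone.directed_le fun _ _ hmn _ hj => le_trans hj hmn) indep_le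

theorem mul_mem_of_mem_span {R A : Type*} [CommSemiring R] [Semiring A] [Algebra R A]
    {s : Set A} {t : Submodule R A} {x y : A} (hs : ∀ z ∈ s, x * z ∈ t) (hy : y ∈ span R s) :
    x * y ∈ t :=
  (span_le (p := t.comap (LinearMap.mulLeft R x))).2 hs hy

end LinearAlgebra

section Compositions

lemma psum_cons (p : ℕ+) (l : List ℕ+) : psum (p :: l) = p + psum l := by
  simp [psum]

lemma psum_append (l₁ l₂ : List ℕ+) : psum (l₁ ++ l₂) = psum l₁ + psum l₂ := by
  simp [psum]

lemma psum_eq_sum_map (l : List ℕ+) : psum l = (l.map PNat.val).sum := by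
  induction l with
  | nil => rfl
  | cons p l ih => rw [psum_cons, ih, List.map_cons, List.sum_cons]

lemma pget_cons_succ (p : ℕ+) (l : List ℕ+) (i : ℕ) : pget (p :: l) (i + 1) = pget l i := rfl

lemma pget_pos {l : List ℕ+} {i : ℕ} (h : i < l.length) : 0 < pget l i := by
  induction l generalizing i with
  | nil => simp at h
  | cons p l ih =>
    cases i with
    | zero => exact p.pos
    | succ i => exact ih (by simpa using h)

lemma finite_setOf_psum_eq (n : ℕ) : {l : List ℕ+ | psum l = n}.Finite := by
  refine Set.Finite.of_finite_image (f := List.map ((↑) : ℕ+ → ℕ))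
    ((Set.finite_range (Composition.blocks (n := n))).subset ?_)
    (List.map_injective_iff.2 PNat.coe_injective).injOn
  rintro _ ⟨l, hl, rfl⟩
  exact ⟨⟨l.map (↑), by simp, psum_eq_sum_map l ▸ hl⟩, rfl⟩

lemma finite_setOf_psum_le (n : ℕ) : {l : List ℕ+ | psum l ≤ n}.Finite :=
  ((Set.finite_le_nat n).biUnion fun k _ => finite_setOf_psum_eq k).subset
    fun l (hl : psum l ≤ n) => Set.mem_biUnion hl rfl

end Compositions

section CompositionPoset

def CCoverInc (x y : List ℕ+) : Prop :=
  ∃ (m : ℕ+) (l₁ l₂ : List ℕ+), x = l₁ ++ m :: l₂ ∧ y = l₁ ++ (m + 1) :: l₂ ∧ m ∉ l₁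

lemma CCoverInc.psum_eq {x y : List ℕ+} (h : CCoverInc x y) : psum y = psum x + 1 := by
  obtain ⟨m, l₁, l₂, rfl, rfl, -⟩ := h
  simp only [psum_append, psum_cons, PNat.add_coe, PNat.one_coe]
  ring

lemma CCoverInc.length_eq {x y : List ℕ+} (h : CCoverInc x y) : y.length = x.length := by
  obtain ⟨m, l₁, l₂, rfl, rfl, -⟩ := h
  simp

lemma CCoverInc.cons_cases {p : ℕ+} {τ z : List ℕ+} (h : CCoverInc (p :: τ) z) :
    z = (p + 1) :: τ ∨ ∃ τ', z = p :: τ' ∧ CCoverInc τ τ' := by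
  obtain ⟨m, l₁, l₂, hx, rfl, hm⟩ := h
  cases l₁ with
  | nil =>
    obtain ⟨rfl, rfl⟩ := List.cons.inj hx
    exact Or.inl rfl
  | cons a l₁ =>
    obtain ⟨rfl, rfl⟩ := List.cons.inj hx
    exact Or.inr ⟨_, rfl, m, l₁, l₂, rfl, rfl, fun h => hm (List.mem_cons_of_mem _ h)⟩

lemma CCover.psum_eq {x y : List ℕ+} (h : CCover x y) : psum y = psum x + 1 := by
  rcases h with rfl | h
  · simp [psum_cons, add_comm]
  · exact CCoverInc.psum_eq h

lemma CLe.psum_le {x y : List ℕ+} (h : CLe x y) : psum x ≤ psum y := by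
  induction h with
  | refl => exact le_rfl
  | tail _ hc ih => have := hc.psum_eq; omega

lemma CLe.length_le {x y : List ℕ+} (h : CLe x y) : x.length ≤ y.length := by
  induction h with
  | refl => exact le_rfl
  | tail _ hc ih =>
    rcases hc with rfl | hc
    · simp only [List.length_cons]; omega
    · exact ih.trans (CCoverInc.length_eq hc).ge

lemma cLe_of_reflTransGen_cCoverInc {x y : List ℕ+} (h : ReflTransGen CCoverInc x y) : CLe x y :=
  ReflTransGen.mono (p := CCover) (fun _ _ => Or.inr) x y h

lemma eq_of_reflTransGen_cCoverInc {x y : List ℕ+} (h : ReflTransGen CCoverInc x y)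
    (hp : psum y ≤ psum x) : x = y := by
  rcases h.cases_head with rfl | ⟨z, hz, hzy⟩
  · rfl
  · have := (cLe_of_reflTransGen_cCoverInc hzy).psum_le
    have := hz.psum_eq
    omega

lemma CLe.reflTransGen_cCoverInc {x y : List ℕ+} (h : CLe x y) (hl : y.length ≤ x.length) :
    ReflTransGen CCoverInc x y := by
  induction h with
  | refl => exact .refl
  | tail hxy hyz ih =>
    rcases hyz with rfl | hinc
    · have := CLe.length_le hxy
      simp only [List.length_cons] at hl
      omega
    · exact (ih (CCoverInc.length_eq hinc ▸ hl)).tail hinc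

lemma CLe.exists_cons_of_length_eq_succ {γ β : List ℕ+} (h : CLe γ β)
    (hl : β.length = γ.length + 1) : ∃ p τ, β = p :: τ ∧ ReflTransGen CCoverInc γ τ := by
  induction h with
  | refl => simp at hl
  | tail hxy hyz ih =>
    rcases hyz with rfl | hinc
    · exact ⟨1, _, rfl, CLe.reflTransGen_cCoverInc hxy (Nat.succ_inj.1 hl).le⟩
    · obtain ⟨p, τ, rfl, hτ⟩ := ih (CCoverInc.length_eq hinc ▸ hl)
      rcases CCoverInc.cons_cases hinc with rfl | ⟨τ', rfl, hτ'⟩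
      · exact ⟨p + 1, τ, rfl, hτ⟩
      · exact ⟨p, τ', rfl, hτ.tail hτ'⟩

lemma cLe_cons (γ : List ℕ+) (b : ℕ+) : CLe γ (b :: γ) := by
  induction b using PNat.recOn with
  | one => exact .single (Or.inl rfl)
  | succ n ih => exact ih.tail (Or.inr ⟨n, [], γ, rfl, rfl, List.not_mem_nil⟩)

end CompositionPoset

section Strips

lemma HCStrip.length_le {γ β : List ℕ+} {i : ℕ} (h : HCStrip γ β i) :
    β.length ≤ γ.length + 1 := by
  by_contra! hlong
  -- the two top rows of `β` are both new, so both contain a cell in column `0`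
  have cell (r : ℕ) (hr : r < 2) : stripCell γ β r 0 :=
    ⟨by omega, pget_pos (by omega), Or.inl (by omega)⟩
  exact h.2.2 0 1 0 zero_ne_one (cell 0 two_pos) (cell 1 one_lt_two)

lemma hcStrip_cons (γ : List ℕ+) (b : ℕ+) : HCStrip γ (b :: γ) b := by
  refine ⟨cLe_cons γ b, by rw [psum_cons, add_comm], ?_⟩
  have row_zero (r c : ℕ) (hc : stripCell γ (b :: γ) r c) : r = 0 := by
    obtain ⟨-, hlt, hr⟩ := hc
    cases r with
    | zero => rfl
    | succ r =>
      simp only [List.length_cons, Nat.add_sub_cancel_left, Nat.add_sub_cancel] at hr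
      rw [pget_cons_succ] at hlt
      exact absurd hlt (by rcases hr with hr | hr <;> [omega; exact not_lt.2 hr])
  intro r s c hrs hr hs
  exact hrs ((row_zero r c hr).trans (row_zero s c hs).symm)

lemma finite_setOf_hcStrip (γ : List ℕ+) (i : ℕ) : {β | HCStrip γ β i}.Finite :=
  (finite_setOf_psum_eq (psum γ + i)).subset fun _ h => h.2.1

noncomputable def hcStrips (γ : List ℕ+) (i : ℕ) : Finset (List ℕ+) :=
  (finite_setOf_hcStrip γ i).toFinset

lemma mem_hcStrips {β γ : List ℕ+} {i : ℕ} : β ∈ hcStrips γ i ↔ HCStrip γ β i :=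
  Set.Finite.mem_toFinset _

lemma finsum_hcStrip_eq_sum {M : Type*} [AddCommMonoid M] (S : List ℕ+ → M) (γ : List ℕ+)
    (i : ℕ) : ∑ᶠ β ∈ {β | HCStrip γ β i}, S β = ∑ β ∈ hcStrips γ i, S β := by
  rw [← finsum_mem_coe_finset, hcStrips, Set.Finite.coe_toFinset]

lemma finsum_hcStrip_eq {M : Type*} [AddCommMonoid M] (S : List ℕ+ → M) (b : ℕ+)
    (γ : List ℕ+) : ∑ᶠ β ∈ {β | HCStrip γ β b}, S β =
      S (b :: γ) + ∑ β ∈ (hcStrips γ b).erase (b :: γ), S β := by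
  rw [finsum_hcStrip_eq_sum, Finset.add_sum_erase _ S (mem_hcStrips.2 (hcStrip_cons γ b))]

end Strips

section Recursion

def pieriKey (α : List ℕ+) : ℕ ×ₗ ℕ ×ₗ ℕ := toLex (psum α, toLex (α.length, pget α 0))

instance : WellFoundedRelation (ℕ ×ₗ ℕ ×ₗ ℕ) := WellFoundedLT.toWellFoundedRelation

lemma pieriKey_lt_cons (γ : List ℕ+) (b : ℕ+) : pieriKey γ < pieriKey (b :: γ) :=
  Prod.Lex.toLex_lt_toLex.2 (Or.inl (by rw [psum_cons]; exact Nat.lt_add_of_pos_left b.pos))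

lemma HCStrip.pieriKey_lt {γ β : List ℕ+} {b : ℕ+} (h : HCStrip γ β b) (hne : β ≠ b :: γ) :
    pieriKey β < pieriKey (b :: γ) := by
  have hsize : psum β = psum (b :: γ) := by rw [psum_cons, h.2.1, add_comm]
  refine Prod.Lex.toLex_lt_toLex.2 (Or.inr ⟨hsize, Prod.Lex.toLex_lt_toLex.2 ?_⟩)
  rcases h.length_le.lt_or_eq with hlt | hlen
  · exact Or.inl (by simpa using hlt)
  obtain ⟨p, τ, rfl, hτ⟩ := h.1.exists_cons_of_length_eq_succ hlen
  have hγτ := (cLe_of_reflTransGen_cCoverInc hτ).psum_le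
  rw [psum_cons, psum_cons] at hsize
  refine Or.inr ⟨by simpa using hlen, ?_⟩
  show (p : ℕ) < b
  refine (show (p : ℕ) ≤ b by omega).lt_of_ne fun hpb => hne ?_
  rw [PNat.coe_injective hpb, eq_of_reflTransGen_cCoverInc hτ (by omega)]

noncomputable def ncSchur : List ℕ+ → NSym
  | [] => 1
  | b :: γ => Hgen b * ncSchur γ - ∑ β ∈ ((hcStrips γ b).erase (b :: γ)).attach, ncSchur β.1
termination_by α => pieriKey α
decreasing_by
  · exact pieriKey_lt_cons γ b
  · obtain ⟨hne, hmem⟩ := Finset.mem_erase.1 β.2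
    exact (mem_hcStrips.1 hmem).pieriKey_lt hne

lemma ncSchur_nil : ncSchur [] = 1 := by
  rw [ncSchur]

lemma ncSchur_cons (b : ℕ+) (γ : List ℕ+) :
    ncSchur (b :: γ) = Hgen b * ncSchur γ - ∑ β ∈ (hcStrips γ b).erase (b :: γ), ncSchur β := by
  rw [ncSchur, Finset.sum_attach _ ncSchur]

lemma ncSchur_pieriFamily : NCPieriFamily ncSchur := by
  refine ⟨ncSchur_nil, fun b γ => ?_⟩
  rw [finsum_hcStrip_eq, ncSchur_cons, sub_add_cancel]

theorem NCPieriFamily.eq_ncSchur {S : List ℕ+ → NSym} (hS : NCPieriFamily S) : S = ncSchur := by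
  funext α
  induction α using ncSchur.induct with
  | case1 => rw [hS.1, ncSchur_nil]
  | case2 b γ ihγ ihβ =>
    have hb := hS.2 b γ
    rw [finsum_hcStrip_eq, eq_comm, ← eq_sub_iff_add_eq] at hb
    rw [hb, ncSchur_cons, ihγ, ← Finset.sum_attach _ S, ← Finset.sum_attach _ ncSchur]
    exact congrArg _ (Finset.sum_congr rfl fun β _ => ihβ β)

end Recursion

section Basis

lemma HL_cons (b : ℕ+) (γ : List ℕ+) : HL (b :: γ) = Hgen b * HL γ := by
  simp [HL]

noncomputable def hBasis : Module.Basis (List ℕ+) ℚ NSym :=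
  (FreeAlgebra.basisFreeMonoid ℚ ℕ+).reindex FreeMonoid.ofList.symm

lemma coe_hBasis : ⇑hBasis = HL := by
  funext α
  change _ = (α.map (FreeAlgebra.ι ℚ)).prod
  simp [hBasis, FreeAlgebra.basisFreeMonoid, FreeAlgebra.equivMonoidAlgebraFreeMonoid]

lemma span_image_psum_le_mono {R M : Type*} [Semiring R] [AddCommMonoid M] [Module R M]
    {v : List ℕ+ → M} {m n : ℕ} (h : m ≤ n) :
    span R (v '' {δ | psum δ ≤ m}) ≤ span R (v '' {δ | psum δ ≤ n}) :=
  span_mono (Set.image_mono fun _ (hδ : psum _ ≤ m) => hδ.trans h)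

lemma ncSchur_mem_span_HL (α : List ℕ+) :
    ncSchur α ∈ span ℚ (HL '' {δ | psum δ ≤ psum α}) := by
  induction α using ncSchur.induct with
  | case1 => exact ncSchur_nil ▸ subset_span ⟨[], le_refl (psum []), rfl⟩
  | case2 b γ ihγ ihβ =>
    rw [ncSchur_cons]
    refine sub_mem (mul_mem_of_mem_span ?_ ihγ) (sum_mem fun β hβ => ?_)
    · rintro _ ⟨δ, hδ, rfl⟩
      refine subset_span ⟨b :: δ, ?_, (HL_cons b δ).symm⟩
      simp only [Set.mem_ofPred_eq, psum_cons] at hδ ⊢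
      omega
    · have hsize := (mem_hcStrips.1 (Finset.mem_of_mem_erase hβ)).2.1
      refine span_image_psum_le_mono (le_of_eq ?_) (ihβ ⟨β, hβ⟩)
      rw [hsize, psum_cons, add_comm]

theorem NCPieriFamily.HL_mem_span {S : List ℕ+ → NSym} (hS : NCPieriFamily S) (α : List ℕ+) :
    HL α ∈ span ℚ (S '' {β | psum β ≤ psum α}) := by
  induction α with
  | nil => exact subset_span ⟨[], le_refl (psum []), hS.1⟩
  | cons b γ ih =>
    rw [HL_cons]
    refine mul_mem_of_mem_span ?_ ih
    rintro _ ⟨β, hβ, rfl⟩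
    rw [hS.2, finsum_hcStrip_eq_sum]
    refine sum_mem fun β' hβ' => subset_span ⟨β', ?_, rfl⟩
    simp only [Set.mem_ofPred_eq, psum_cons, (mem_hcStrips.1 hβ').2.1] at hβ ⊢
    omega

theorem NCPieriFamily.span_eq_top {S : List ℕ+ → NSym} (hS : NCPieriFamily S) :
    span ℚ (Set.range S) = ⊤ := by
  refine eq_top_iff.2 (hBasis.span_eq.ge.trans (span_le.2 (Set.range_subset_iff.2 fun α => ?_)))
  rw [coe_hBasis]
  exact span_mono (Set.image_subset_range _ _) (hS.HL_mem_span α)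

theorem ncSchur_linearIndependent : LinearIndependent ℚ ncSchur := by
  refine .of_filtered_mutual_span psum finite_setOf_psum_le hBasis.linearIndependent ?_ ?_ <;>
    rw [coe_hBasis]
  exacts [ncSchur_mem_span_HL, ncSchur_pieriFamily.HL_mem_span]

end Basis

/-- There exists a unique family `{S_α}` in `NSym`, indexed by
compositions, with `S_∅ = 1`, satisfying the noncommutative Pieri rule; moreover, any such
family is a ℚ-basis of `NSym`. -/
theorem ncschur_existsUnique_and_basis :
    (∃! S : List ℕ+ → NSym, NCPieriFamily S) ∧
      ∀ S : List ℕ+ → NSym, NCPieriFamily S →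
        LinearIndependent ℚ S ∧ Submodule.span ℚ (Set.range S) = ⊤ := by
  refine ⟨⟨ncSchur, ncSchur_pieriFamily, fun S hS => hS.eq_ncSchur⟩, fun S hS => ?_⟩
  exact ⟨hS.eq_ncSchur ▸ ncSchur_linearIndependent, hS.span_eq_top⟩
end

section
/- Fix an integer k ≥ 1. The ℚ-linear span of the monomial symmetric functions m_λ over all partitions λ having a part greater than k is an ideal of the algebra of symmetric power series (the span of all m_λ); consequently, the quotient Sym^(k) is a ℚ-algebra and the images of {m_λ : λ is k-bounded} form a ℚ-basis of Sym^(k). -/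
/-- The algebra of symmetric power series: the ℚ-span of the monomial symmetric
functions `m_λ`. -/
noncomputable def SymPSSub : Submodule ℚ PS := Submodule.span ℚ (Set.range mPS)

/-- The ℚ-span of the monomial symmetric functions `m_λ` over all partitions `λ` having a
part greater than `k`. -/
noncomputable def badP (k : ℕ) : Submodule ℚ PS :=
  Submodule.span ℚ (mPS '' {lam : Ptn | ¬ kBddP k lam})

/-- The quotient `Sym^(k)` of the algebra of symmetric power series by the span of the
non-`k`-bounded monomial symmetric functions. -/
abbrev SymQuot (k : ℕ) : Type :=
  SymPSSub ⧸ Submodule.comap SymPSSub.subtype (badP k)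

/-- The image of `m_λ` in the quotient `Sym^(k)`. -/
noncomputable def mQuot (k : ℕ) (lam : Ptn) : SymQuot k :=
  Submodule.Quotient.mk ⟨mPS lam, Submodule.subset_span (Set.mem_range_self lam)⟩

/-!
The monomial symmetric functions `m_λ` span exactly the power series of bounded degree whose
coefficients are invariant under permutations of the variables, and these form a subalgebra.
A series of that subalgebra lies in the span of the `m_λ` with a part `> k` exactly when its
coefficients vanish at every monomial whose exponents are all `≤ k`; this passes to products,
because every factor of such a monomial again has all exponents `≤ k`. In the quotient, the
coefficients at the monomials `x₀^λ₁ x₁^λ₂ ⋯` with `λ` `k`-bounded are well defined and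
separate the images of the `k`-bounded `m_λ`.
-/

open MvPowerSeries

section Exponents

variable {α : Type*}

def expMultiset (d : α →₀ ℕ) : Multiset ℕ := d.support.val.map d

lemma mem_expMultiset {d : α →₀ ℕ} {x : ℕ} : x ∈ expMultiset d ↔ ∃ a, d a ≠ 0 ∧ d a = x := by
  simp [expMultiset]

lemma zero_notMem_expMultiset (d : α →₀ ℕ) : 0 ∉ expMultiset d := by
  simp [mem_expMultiset]

lemma sum_expMultiset (d : α →₀ ℕ) : (expMultiset d).sum = d.degree := rfl

lemma expMultiset_domCongr {β : Type*} (e : α ≃ β) (d : α →₀ ℕ) :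
    expMultiset (Finsupp.domCongr e d) = expMultiset d := by
  change Multiset.map (Finsupp.equivMapDomain e d) (d.support.val.map e) = _
  simp [expMultiset, Multiset.map_map, Function.comp_def]

lemma card_fiber_eq_count_expMultiset (d : α →₀ ℕ) (c : ℕ) :
    Fintype.card {a : d.support // d a = c} = (expMultiset d).count c := by
  classical
  rw [Fintype.card_subtype, Finset.univ_eq_attach, Finset.filter_attach (fun a => d a = c),
    Finset.card_map, Finset.card_attach, expMultiset, Multiset.count_map]
  simp_rw [eq_comm (a := c)]
  rfl

lemma exists_domCongr_eq_of_expMultiset_eq {d d' : α →₀ ℕ}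
    (h : expMultiset d = expMultiset d') : ∃ e : Equiv.Perm α, Finsupp.domCongr e d = d' := by
  classical
  let e₀ : d.support ≃ d'.support :=
    Equiv.ofFiberEquiv (f := fun a => d a) (g := fun b => d' b) fun c => Fintype.equivOfCardEq <| by
      rw [card_fiber_eq_count_expMultiset, card_fiber_eq_count_expMultiset, h]
  have he₀ : ∀ a, d' (e₀ a) = d a :=
    Equiv.ofFiberEquiv_map (f := fun a : d.support => d a) (g := fun b : d'.support => d' b) _
  let e := e₀.extendSubtype
  have he : ∀ a, d' (e a) = d a := by
    intro a
    by_cases ha : a ∈ d.support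
    · rw [e₀.extendSubtype_apply_of_mem a ha, he₀]
    · rw [Finsupp.notMem_support_iff.mp ha, ← Finsupp.notMem_support_iff]
      exact e₀.extendSubtype_not_mem a ha
  exact ⟨e, Finsupp.ext fun b => by simpa using (he (e.symm b)).symm⟩

end Exponents

section Subalgebras

variable (σ R : Type*) [CommSemiring R]

def symmetricSubalgebra : Subalgebra R (MvPowerSeries σ R) where
  carrier := {f | ∀ (e : Equiv.Perm σ) d, coeff (Finsupp.domCongr e d) f = coeff d f}
  mul_mem' {f g} hf hg e d := by
    classical
    rw [coeff_mul, coeff_mul]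
    let e₂ := (Finsupp.domCongr (M := ℕ) e).toEquiv
    refine (Finset.sum_equiv (e₂.prodCongr e₂) (fun p => ?_) (fun p _ => ?_)).symm
    · simp only [e₂, Equiv.prodCongr_apply, Prod.map, AddEquiv.toEquiv_eq_coe,
        AddEquiv.coe_toEquiv, Finset.HasAntidiagonal.mem_antidiagonal, ← map_add,
        (Finsupp.domCongr e).injective.eq_iff]
    · simp only [e₂, Equiv.prodCongr_apply, Prod.map, AddEquiv.toEquiv_eq_coe,
        AddEquiv.coe_toEquiv, hf e, hg e]
  add_mem' hf hg e d := by rw [map_add, map_add, hf e d, hg e d]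
  algebraMap_mem' r e d := by
    classical
    simp only [MvPowerSeries.algebraMap_apply, coeff_C, AddEquivClass.map_eq_zero_iff]

def boundedDegreeSubalgebra : Subalgebra R (MvPowerSeries σ R) where
  carrier := {f | ∃ N, ∀ d : σ →₀ ℕ, N < d.degree → coeff d f = 0}
  mul_mem' {f g} := by
    classical
    rintro ⟨M, hf⟩ ⟨N, hg⟩
    refine ⟨M + N, fun d hd => ?_⟩
    rw [coeff_mul]
    refine Finset.sum_eq_zero fun p hp => ?_
    rw [Finset.HasAntidiagonal.mem_antidiagonal] at hp
    have : M < p.1.degree ∨ N < p.2.degree := by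
      by_contra! h
      rw [← hp, map_add] at hd
      omega
    rcases this with h | h
    · rw [hf _ h, zero_mul]
    · rw [hg _ h, mul_zero]
  add_mem' {f g} := by
    rintro ⟨M, hf⟩ ⟨N, hg⟩
    exact ⟨max M N, fun d hd => by
      rw [map_add, hf d ((le_max_left _ _).trans_lt hd), hg d ((le_max_right _ _).trans_lt hd),
        add_zero]⟩
  algebraMap_mem' r := by
    classical
    refine ⟨0, fun d hd => ?_⟩
    rw [MvPowerSeries.algebraMap_apply, coeff_C, if_neg]
    rintro rfl
    simp at hd

variable {σ R}

lemma coeff_eq_of_expMultiset_eq {f : MvPowerSeries σ R} (hf : f ∈ symmetricSubalgebra σ R)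
    {d d' : σ →₀ ℕ} (h : expMultiset d = expMultiset d') : coeff d f = coeff d' f := by
  obtain ⟨e, rfl⟩ := exists_domCongr_eq_of_expMultiset_eq h
  exact (hf e d).symm

end Subalgebras

-- The coercion in `Mqs` elaborates to the list-monad lift `(l : List ℕ) = l >>= pure ∘ (↑)`.
lemma coe_pnat_list (l : List ℕ+) : (l : List ℕ) = l.map (↑) := List.flatMap_pure_eq_map _ _

def partMultiset (l : List ℕ+) : Multiset ℕ := (l : Multiset ℕ+).map (↑)

lemma partMultiset_injective : Function.Injective fun lam : Ptn => partMultiset lam.1 := by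
  intro lam mu h
  have hperm : lam.1.Perm mu.1 :=
    Multiset.coe_eq_coe.mp (Multiset.map_injective PNat.coe_injective h)
  exact Subtype.ext (hperm.eq_of_pairwise' lam.2 mu.2)

lemma exists_partMultiset_eq (s : Multiset ℕ) (hs : 0 ∉ s) :
    ∃ lam : Ptn, partMultiset lam.1 = s := by
  lift s to Multiset ℕ+ using fun x hx => Nat.pos_of_ne_zero (ne_of_mem_of_not_mem hx hs)
  refine ⟨⟨s.sort (· ≥ ·), s.pairwise_sort _⟩, ?_⟩
  rw [partMultiset, Multiset.sort_eq]

lemma finite_setOf_sum_partMultiset_le (N : ℕ) :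
    {lam : Ptn | (partMultiset lam.1).sum ≤ N}.Finite := by
  refine Set.Finite.of_finite_image ?_ partMultiset_injective.injOn
  refine ((Finset.range (N + 1)).finite_toSet.biUnion
    fun n _ => Set.finite_range (Nat.Partition.parts (n := n))).subset ?_
  rintro _ ⟨lam, hlam, rfl⟩
  simp only [Set.mem_iUnion]
  refine ⟨_, by simpa [Nat.lt_succ_iff] using hlam, ⟨partMultiset lam.1, ?_, rfl⟩, rfl⟩
  simp only [partMultiset, Multiset.mem_map]
  rintro _ ⟨p, -, rfl⟩
  exact p.pos

def ptnMonomial (lam : Ptn) : ℕ →₀ ℕ := (lam.1.map (↑) : List ℕ).toFinsupp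

lemma support_ptnMonomial (lam : Ptn) :
    (ptnMonomial lam).support = Finset.range lam.1.length := by
  rw [ptnMonomial, List.toFinsupp_support, Finset.filter_true_of_mem]
  · simp
  intro i hi
  rw [List.getD_eq_getElem _ _ (by simpa using hi)]
  simp

lemma expMultiset_ptnMonomial (lam : Ptn) :
    expMultiset (ptnMonomial lam) = partMultiset lam.1 := by
  rw [expMultiset, support_ptnMonomial, Finset.range_val, Multiset.range, Multiset.map_coe,
    partMultiset, Multiset.map_coe]
  congr 1
  apply List.ext_getElem (by simp)
  intro i h1 h2
  simp [ptnMonomial, List.toFinsupp_apply, List.getElem?_eq_getElem (by simpa using h2)]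

lemma ptnMonomial_le {k : ℕ} {lam : Ptn} (h : kBddP k lam) (i : ℕ) : ptnMonomial lam i ≤ k := by
  rcases Nat.eq_zero_or_pos (ptnMonomial lam i) with h0 | hpos
  · exact h0 ▸ Nat.zero_le k
  have hmem : ptnMonomial lam i ∈ partMultiset lam.1 := by
    rw [← expMultiset_ptnMonomial, mem_expMultiset]
    exact ⟨i, hpos.ne', rfl⟩
  obtain ⟨p, hp, hpi⟩ := Multiset.mem_map.mp hmem
  exact hpi ▸ h p hp

lemma coeff_Mqs (α : List ℕ+) (d : ℕ →₀ ℕ) :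
    coeff d (Mqs α) = if (d.support.sort (· ≤ ·)).map d = α.map (↑) then 1 else 0 := by
  change (if _ then (1 : ℚ) else 0) = _
  simp only [coe_pnat_list, List.map_id']

lemma mPS_eq_sum (lam : Ptn) : mPS lam = ∑ α ∈ lam.1.permutations.toFinset, Mqs α := by
  rw [mPS, ← finsum_mem_coe_finset]
  congr 1
  ext α
  simp [List.mem_permutations]

lemma coeff_mPS (lam : Ptn) (d : ℕ →₀ ℕ) :
    coeff d (mPS lam) = if expMultiset d = partMultiset lam.1 then 1 else 0 := by
  classical
  -- `M_α` contributes exactly when `α` lifts the sorted exponent list of `d`.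
  have hinj : Set.InjOn (List.map ((↑) : ℕ+ → ℕ)) lam.1.permutations.toFinset :=
    (List.map_injective_iff.mpr PNat.coe_injective).injOn
  rw [mPS_eq_sum, map_sum]
  simp_rw [coeff_Mqs]
  rw [← Finset.sum_image (g := List.map ((↑) : ℕ+ → ℕ))
    (f := fun β => if _ = β then (1 : ℚ) else 0) hinj, Finset.sum_ite_eq]
  refine if_congr ?_ rfl rfl
  have hsort : (((d.support.sort (· ≤ ·)).map d : List ℕ) : Multiset ℕ) = expMultiset d := by
    rw [← Multiset.map_coe, Finset.sort_eq, expMultiset]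
  simp only [Finset.mem_image, List.mem_toFinset]
  rw [← List.mem_map, List.map_permutations, List.mem_permutations, ← Multiset.coe_eq_coe, hsort,
    partMultiset, Multiset.map_coe]

lemma coeff_ptnMonomial_mPS (lam mu : Ptn) :
    coeff (ptnMonomial lam) (mPS mu) = if lam = mu then 1 else 0 := by
  simp only [coeff_mPS, expMultiset_ptnMonomial, partMultiset_injective.eq_iff]

lemma mPS_mem_symmetricSubalgebra (lam : Ptn) : mPS lam ∈ symmetricSubalgebra ℕ ℚ :=
  fun e d => by rw [coeff_mPS, coeff_mPS, expMultiset_domCongr]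

lemma mPS_mem_boundedDegreeSubalgebra (lam : Ptn) : mPS lam ∈ boundedDegreeSubalgebra ℕ ℚ := by
  refine ⟨(partMultiset lam.1).sum, fun d hd => ?_⟩
  rw [coeff_mPS, if_neg]
  rintro h
  rw [← sum_expMultiset, h] at hd
  exact lt_irrefl _ hd

lemma mem_span_mPS_of_mem {f : PS} (hs : f ∈ symmetricSubalgebra ℕ ℚ)
    (hb : f ∈ boundedDegreeSubalgebra ℕ ℚ) :
    f ∈ Submodule.span ℚ (mPS '' {lam | coeff (ptnMonomial lam) f ≠ 0}) := by
  classical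
  obtain ⟨N, hN⟩ := hb
  have hfin : {lam : Ptn | coeff (ptnMonomial lam) f ≠ 0}.Finite := by
    refine (finite_setOf_sum_partMultiset_le N).subset fun lam hlam => ?_
    by_contra h
    rw [Set.mem_ofPred_eq, not_le, ← expMultiset_ptnMonomial, sum_expMultiset] at h
    exact hlam (hN _ h)
  have hdecomp : f = ∑ lam ∈ hfin.toFinset, coeff (ptnMonomial lam) f • mPS lam := by
    ext d
    obtain ⟨lam, hlam⟩ := exists_partMultiset_eq _ (zero_notMem_expMultiset d)
    have hmu : ∀ mu : Ptn, expMultiset d = partMultiset mu.1 ↔ lam = mu := fun mu => by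
      rw [← hlam, partMultiset_injective.eq_iff]
    simp only [map_sum, map_smul, coeff_mPS, hmu, smul_eq_mul, mul_ite, mul_one, mul_zero,
      Finset.sum_ite_eq, Set.Finite.mem_toFinset, Set.mem_ofPred_eq, ite_not]
    rw [coeff_eq_of_expMultiset_eq hs (d' := ptnMonomial lam)
      (by rw [expMultiset_ptnMonomial, hlam])]
    split_ifs with h <;> simp [h]
  have hsum : ∑ lam ∈ hfin.toFinset, coeff (ptnMonomial lam) f • mPS lam ∈
      Submodule.span ℚ (mPS '' {lam | coeff (ptnMonomial lam) f ≠ 0}) :=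
    Submodule.sum_smul_mem _ _ fun lam hlam =>
      Submodule.subset_span (Set.mem_image_of_mem mPS (hfin.mem_toFinset.mp hlam))
  rwa [← hdecomp] at hsum

lemma SymPSSub_eq_toSubmodule :
    SymPSSub =
      Subalgebra.toSubmodule (symmetricSubalgebra ℕ ℚ ⊓ boundedDegreeSubalgebra ℕ ℚ) := by
  refine le_antisymm (Submodule.span_le.mpr ?_) fun f hf => ?_
  · rintro _ ⟨lam, rfl⟩
    exact ⟨mPS_mem_symmetricSubalgebra lam, mPS_mem_boundedDegreeSubalgebra lam⟩
  · exact Submodule.span_mono (Set.image_subset_range _ _) (mem_span_mPS_of_mem hf.1 hf.2)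

lemma mul_mem_SymPSSub {f g : PS} (hf : f ∈ SymPSSub) (hg : g ∈ SymPSSub) :
    f * g ∈ SymPSSub := by
  rw [SymPSSub_eq_toSubmodule] at hf hg ⊢
  exact Subalgebra.mul_mem _ hf hg

lemma badP_le_SymPSSub (k : ℕ) : badP k ≤ SymPSSub :=
  Submodule.span_mono (Set.image_subset_range _ _)

lemma coeff_eq_zero_of_mem_badP {k : ℕ} {g : PS} (hg : g ∈ badP k) {d : ℕ →₀ ℕ}
    (hd : ∀ i, d i ≤ k) : coeff d g = 0 := by
  induction hg using Submodule.span_induction with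
  | mem _ h =>
    obtain ⟨lam, hlam, rfl⟩ := h
    rw [coeff_mPS, if_neg]
    intro heq
    refine hlam fun p hp => ?_
    have hmem : (p : ℕ) ∈ expMultiset d := heq ▸ Multiset.mem_map_of_mem _ hp
    obtain ⟨i, -, hi⟩ := mem_expMultiset.mp hmem
    exact hi ▸ hd i
  | zero => exact map_zero _
  | add _ _ _ _ ha hb => rw [map_add, ha, hb, add_zero]
  | smul c _ _ h => rw [map_smul, h, smul_zero]

lemma mem_badP_of_coeff_eq_zero {k : ℕ} {f : PS} (hf : f ∈ SymPSSub)
    (h : ∀ d : ℕ →₀ ℕ, (∀ i, d i ≤ k) → coeff d f = 0) : f ∈ badP k := by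
  rw [SymPSSub_eq_toSubmodule] at hf
  refine Submodule.span_mono (Set.image_mono fun lam hlam hk => ?_)
    (mem_span_mPS_of_mem hf.1 hf.2)
  exact hlam (h _ (ptnMonomial_le hk))

lemma mul_mem_badP {k : ℕ} {f g : PS} (hf : f ∈ SymPSSub) (hg : g ∈ badP k) :
    f * g ∈ badP k := by
  classical
  refine mem_badP_of_coeff_eq_zero (mul_mem_SymPSSub hf (badP_le_SymPSSub k hg)) fun d hd => ?_
  rw [coeff_mul]
  refine Finset.sum_eq_zero fun p hp => ?_
  rw [Finset.HasAntidiagonal.mem_antidiagonal] at hp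
  have hle : ∀ i, p.2 i ≤ k := fun i => by
    have := hd i
    rw [← hp, Finsupp.add_apply] at this
    omega
  rw [coeff_eq_zero_of_mem_badP hg hle, mul_zero]

lemma mQuot_eq_zero {k : ℕ} {lam : Ptn} (h : ¬ kBddP k lam) : mQuot k lam = 0 :=
  (Submodule.Quotient.mk_eq_zero _).mpr (Submodule.subset_span ⟨lam, h, rfl⟩)

lemma linearIndependent_mQuot (k : ℕ) :
    LinearIndependent ℚ fun lam : {lam : Ptn // kBddP k lam} => mQuot k lam.1 := by
  classical
  let Φ : SymQuot k →ₗ[ℚ] ({lam : Ptn // kBddP k lam} → ℚ) :=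
    (Submodule.comap SymPSSub.subtype (badP k)).liftQ
      (LinearMap.pi fun lam => (coeff (ptnMonomial lam.1)).comp SymPSSub.subtype)
      fun x hx => by
        ext lam
        exact coeff_eq_zero_of_mem_badP hx (ptnMonomial_le lam.2)
  refine LinearIndependent.of_comp Φ ?_
  convert Pi.linearIndependent_single_one {lam : Ptn // kBddP k lam} ℚ using 1
  funext lam mu
  change coeff (ptnMonomial mu.1) (mPS lam.1) = _
  simp only [coeff_ptnMonomial_mPS, Pi.single_apply, Subtype.ext_iff]

lemma span_mQuot (k : ℕ) :
    Submodule.span ℚ (Set.range fun lam : {lam : Ptn // kBddP k lam} => mQuot k lam.1) = ⊤ := by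
  have hall : Submodule.span ℚ (Set.range (mQuot k)) = ⊤ := by
    have hrange : Set.range (mQuot k) =
        Submodule.mkQ _ '' (((↑) : SymPSSub → PS) ⁻¹' Set.range mPS) := by
      ext y
      constructor
      · rintro ⟨lam, rfl⟩
        exact ⟨_, ⟨lam, rfl⟩, rfl⟩
      · rintro ⟨⟨_, _⟩, ⟨lam, rfl⟩, rfl⟩
        exact ⟨lam, rfl⟩
    have htop : Submodule.span ℚ (((↑) : SymPSSub → PS) ⁻¹' Set.range mPS) = ⊤ :=
      Submodule.span_span_coe_preimage
    rw [hrange, ← Submodule.map_span, htop, Submodule.map_top, Submodule.range_mkQ]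
  refine eq_top_iff.mpr (hall ▸ Submodule.span_le.mpr ?_)
  rintro _ ⟨lam, rfl⟩
  by_cases h : kBddP k lam
  · exact Submodule.subset_span ⟨⟨lam, h⟩, rfl⟩
  · rw [SetLike.mem_coe, mQuot_eq_zero h]
    exact Submodule.zero_mem _

theorem symQuot_ideal_and_basis_general (k : ℕ) :
    (∀ f ∈ SymPSSub, ∀ g ∈ SymPSSub, f * g ∈ SymPSSub) ∧
      badP k ≤ SymPSSub ∧
      (∀ f ∈ SymPSSub, ∀ g ∈ badP k, f * g ∈ badP k) ∧
      (LinearIndependent ℚ fun lam : {lam : Ptn // kBddP k lam} => mQuot k lam.1) ∧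
      Submodule.span ℚ
          (Set.range fun lam : {lam : Ptn // kBddP k lam} => mQuot k lam.1) = ⊤ :=
  ⟨fun _ hf _ hg => mul_mem_SymPSSub hf hg, badP_le_SymPSSub k,
    fun _ hf _ hg => mul_mem_badP hf hg, linearIndependent_mQuot k, span_mQuot k⟩

/-- Fix `k ≥ 1`.  The span of `{m_λ : λ has a part > k}` is an ideal of
the algebra of symmetric power series (the span of all `m_λ`, which is closed under
multiplication); consequently the quotient `Sym^(k)` is a ℚ-algebra and the images of the
`k`-bounded monomial symmetric functions form a ℚ-basis of `Sym^(k)`. -/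
theorem symQuot_ideal_and_basis (k : ℕ) (hk : 1 ≤ k) :
    (∀ f ∈ SymPSSub, ∀ g ∈ SymPSSub, f * g ∈ SymPSSub) ∧
      badP k ≤ SymPSSub ∧
      (∀ f ∈ SymPSSub, ∀ g ∈ badP k, f * g ∈ badP k) ∧
      (LinearIndependent ℚ fun lam : {lam : Ptn // kBddP k lam} => mQuot k lam.1) ∧
      Submodule.span ℚ
          (Set.range fun lam : {lam : Ptn // kBddP k lam} => mQuot k lam.1) = ⊤ :=
  symQuot_ideal_and_basis_general k
end
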